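/- arXiv:1210.3830 — 6 statements merged into one kernel-verified Lean document; each statement's English description precedes it below -/
import Mathlib

section
/- Let f : ℕ → (0,∞) be non-decreasing with lim f(k)/k = γ ∈ [0,1). Define μ(k) = (1/(1+f(k))) · ∏_{l=0}^{k-1} f(l)/(1+f(l)). Then μ is a probability measure on ℕ, i.e., ∑_{k≥0} μ(k) = 1. -/
open Finset Filter

/-!
Writing `p l = f l / (1 + f l)`, the weights telescope: `μ k = (1 - p k) ∏_{l<k} p l`, so the
partial sums are `1 - ∏_{l<n} p l`. Since `1 - p ≤ exp (-(1 - p))`, that product is at most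
`exp (-∑_{l<n} 1 / (1 + f l))`, and the sum diverges because `f l ≤ l` eventually (as `γ < 1`),
so it dominates the harmonic series.
-/

theorem sum_range_one_sub_mul_prod_range {R : Type*} [CommRing R] (p : ℕ → R) (n : ℕ) :
    ∑ k ∈ range n, (1 - p k) * ∏ l ∈ range k, p l = 1 - ∏ l ∈ range n, p l := by
  induction n with
  | zero => simp
  | succ n ih => rw [sum_range_succ, ih, prod_range_succ]; ring

theorem tendsto_prod_range_zero_of_not_summable_one_sub {p : ℕ → ℝ}
    (h0 : ∀ l, 0 ≤ p l) (h1 : ∀ l, p l ≤ 1) (hp : ¬ Summable fun l => 1 - p l) :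
    Tendsto (fun n => ∏ l ∈ range n, p l) atTop (nhds 0) := by
  have hsum : Tendsto (fun n => ∑ l ∈ range n, (1 - p l)) atTop atTop :=
    (not_summable_iff_tendsto_nat_atTop_of_nonneg fun l => sub_nonneg.2 (h1 l)).1 hp
  have hexp : Tendsto (fun n => Real.exp (-∑ l ∈ range n, (1 - p l))) atTop (nhds 0) :=
    Real.tendsto_exp_atBot.comp (tendsto_neg_atTop_atBot.comp hsum)
  refine squeeze_zero (fun n => prod_nonneg fun l _ => h0 l) (fun n => ?_) hexp
  calc ∏ l ∈ range n, p l
      ≤ ∏ l ∈ range n, Real.exp (-(1 - p l)) :=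
        prod_le_prod (fun l _ => h0 l) fun l _ => by
          simpa using Real.one_sub_le_exp_neg (1 - p l)
    _ = Real.exp (-∑ l ∈ range n, (1 - p l)) := by
        rw [← Real.exp_sum, sum_neg_distrib]

theorem eventually_le_natCast_of_tendsto_div_lt_one {f : ℕ → ℝ} {γ : ℝ}
    (hlim : Tendsto (fun k : ℕ => f k / k) atTop (nhds γ)) (hγ1 : γ < 1) :
    ∀ᶠ k : ℕ in atTop, f k ≤ k := by
  filter_upwards [hlim.eventually_lt_const hγ1, eventually_gt_atTop 0] with k hk hk0
  exact ((div_lt_one (Nat.cast_pos.2 hk0)).1 hk).le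

theorem not_summable_one_div_one_add_of_eventually_le {f : ℕ → ℝ} (hf : ∀ k, 0 ≤ f k)
    (hle : ∀ᶠ k : ℕ in atTop, f k ≤ k) :
    ¬ Summable fun k => 1 / (1 + f k) := by
  intro hs
  have harmonic : Summable fun k : ℕ => 1 / ((k + 1 : ℕ) : ℝ) := by
    refine hs.of_norm_bounded_eventually_nat ?_
    filter_upwards [hle] with k hk
    rw [Real.norm_of_nonneg (by positivity), Nat.cast_succ, add_comm]
    exact one_div_le_one_div_of_le (by linarith [hf k]) (by linarith)
  exact Real.not_summable_one_div_natCast ((summable_nat_add_iff 1).1 harmonic)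

theorem mu_is_probability_measure_general
    (f : ℕ → ℝ) (γ : ℝ)
    (hpos : ∀ k, 0 < f k)
    (hγ1 : γ < 1)
    (hlim : Tendsto (fun k : ℕ => f k / k) atTop (nhds γ))
    (μ : ℕ → ℝ)
    (hμ : ∀ k, μ k = (1 / (1 + f k)) * ∏ l ∈ range k, f l / (1 + f l)) :
    ∑' k : ℕ, μ k = 1 := by
  set p : ℕ → ℝ := fun l => f l / (1 + f l)
  have hf : ∀ k, 0 ≤ f k := fun k => (hpos k).le
  have hp0 : ∀ l, 0 ≤ p l := fun l => div_nonneg (hf l) (by linarith [hf l])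
  have hp1 : ∀ l, p l ≤ 1 := fun l => (div_le_one (by linarith [hf l])).2 (by linarith)
  have one_sub_p : ∀ l, 1 - p l = 1 / (1 + f l) := fun l => by
    have : 1 + f l ≠ 0 := by linarith [hf l]
    simp only [p]; field_simp; ring
  have hμp : ∀ k, μ k = (1 - p k) * ∏ l ∈ range k, p l := fun k => by rw [hμ, one_sub_p]
  have hprod : Tendsto (fun n => ∏ l ∈ range n, p l) atTop (nhds 0) := by
    refine tendsto_prod_range_zero_of_not_summable_one_sub hp0 hp1 ?_
    simpa only [one_sub_p] using not_summable_one_div_one_add_of_eventually_le hf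
      (eventually_le_natCast_of_tendsto_div_lt_one hlim hγ1)
  refine ((hasSum_iff_tendsto_nat_of_nonneg (fun k => ?_) 1).2 ?_).tsum_eq
  · rw [hμp]; exact mul_nonneg (sub_nonneg.2 (hp1 k)) (prod_nonneg fun l _ => hp0 l)
  · simpa only [hμp, sum_range_one_sub_mul_prod_range, sub_zero] using
      tendsto_const_nhds.sub hprod

/-- If `f : ℕ → (0,∞)` is non-decreasing with `f k / k → γ ∈ [0,1)`, then
`μ k = (1/(1+f k)) * ∏_{l<k} f l/(1+f l)` sums to one. -/
theorem mu_is_probability_measure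
    (f : ℕ → ℝ) (γ : ℝ)
    (hpos : ∀ k, 0 < f k) (hmono : Monotone f)
    (hγ0 : 0 ≤ γ) (hγ1 : γ < 1)
    (hlim : Tendsto (fun k : ℕ => f k / k) atTop (nhds γ))
    (μ : ℕ → ℝ)
    (hμ : ∀ k, μ k = (1 / (1 + f k)) * ∏ l ∈ range k, f l / (1 + f l)) :
    ∑' k : ℕ, μ k = 1 :=
  mu_is_probability_measure_general f γ hpos hγ1 hlim μ hμ
end

section
/- Let f(k) = γk + β with γ ∈ (0,1) and β > 0. Then the measure μ(k) = (1/(1+f(k))) ∏_{l=0}^{k-1} f(l)/(1+f(l)) equals (1/γ) · Γ(k + β/γ)Γ((β+1)/γ) / (Γ(k + (β+γ+1)/γ)Γ(β/γ)), and consequently μ(k) ~ C·k^{-(1+1/γ)} as k → ∞ with C = Γ((β+1)/γ)/(γ·Γ(β/γ)). -/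
/-!
The ratio `μ (k + 1) / μ k = f k / (1 + f (k + 1))` equals `(k + a) / (k + b)` with
`a = β / γ` and `b = (β + γ + 1) / γ`, which is also the ratio of consecutive terms of
`Γ (k + a) / Γ (k + b)`; comparing the values at `k = 0` gives the closed formula.
The asymptotics then follow from Euler's limit formula `Γ s = lim n ^ s n! / ∏_{j ≤ n} (s + j)`,
which gives `Γ (n + a) / Γ (n + b) ~ n ^ (a - b)`.
-/

open Finset Filter Real

namespace Real

lemma Gamma_nat_add_eq_prod_mul {a : ℝ} (ha : 0 < a) (n : ℕ) :
    Gamma (n + a) = (∏ j ∈ range n, (a + j)) * Gamma a := by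
  induction n with
  | zero => simp
  | succ n ih =>
    rw [Nat.cast_succ, add_right_comm, Gamma_add_one (by positivity), ih, prod_range_succ]
    ring

lemma GammaSeq_eq_div_Gamma_nat_add {a : ℝ} (ha : 0 < a) (n : ℕ) :
    GammaSeq a n = (n : ℝ) ^ a * n.factorial * Gamma a / ((a + n) * Gamma (n + a)) := by
  have hprod : 0 < ∏ j ∈ range n, (a + j) := prod_pos fun j _ => by positivity
  have hGa := Gamma_pos_of_pos ha
  rw [GammaSeq, prod_range_succ, Gamma_nat_add_eq_prod_mul ha]
  field_simp

lemma tendsto_Gamma_nat_add_div_Gamma_nat_add_mul_rpow {a b : ℝ} (ha : 0 < a) (hb : 0 < b) :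
    Tendsto (fun n : ℕ => Gamma (n + a) / Gamma (n + b) * (n : ℝ) ^ (b - a)) atTop (nhds 1) := by
  have hGa := Gamma_pos_of_pos ha
  have hGb := Gamma_pos_of_pos hb
  have hlim : Tendsto (fun n : ℕ =>
      Gamma a / Gamma b * (GammaSeq b n / GammaSeq a n) * ((b + 1 * n) / (a + 1 * n)))
      atTop (nhds (Gamma a / Gamma b * (Gamma b / Gamma a) * (1 / 1))) :=
    ((GammaSeq_tendsto_Gamma b).div (GammaSeq_tendsto_Gamma a) hGa.ne').const_mul _ |>.mul
      (tendsto_add_mul_div_add_mul_atTop_nhds b a 1 one_ne_zero)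
  rw [show Gamma a / Gamma b * (Gamma b / Gamma a) * (1 / 1) = 1 by field_simp] at hlim
  refine hlim.congr' ?_
  filter_upwards [eventually_ge_atTop 1] with n hn
  have hn0 : (0 : ℝ) < n := by exact_mod_cast hn
  have hGna := Gamma_pos_of_pos (by positivity : (0 : ℝ) < n + a)
  have hGnb := Gamma_pos_of_pos (by positivity : (0 : ℝ) < n + b)
  have hna := rpow_pos_of_pos hn0 a
  have hnb := rpow_pos_of_pos hn0 b
  have hfac : (0 : ℝ) < n.factorial := by exact_mod_cast n.factorial_pos
  rw [GammaSeq_eq_div_Gamma_nat_add ha, GammaSeq_eq_div_Gamma_nat_add hb, rpow_sub hn0]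
  field_simp

end Real

lemma eq_mul_Gamma_div_of_succ_eq_mul {u : ℕ → ℝ} {a b : ℝ} (ha : 0 < a) (hb : 0 < b)
    (hu : ∀ k : ℕ, u (k + 1) = u k * ((k + a) / (k + b))) (k : ℕ) :
    u k = u 0 * (Gamma (k + a) * Gamma b) / (Gamma (k + b) * Gamma a) := by
  have hGa := Gamma_pos_of_pos ha
  have hGb := Gamma_pos_of_pos hb
  induction k with
  | zero => rw [Nat.cast_zero, zero_add, zero_add, mul_comm (Gamma a)]; field_simp
  | succ k ih =>
    have hkb : (0 : ℝ) < k + b := by positivity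
    have hGkb := Gamma_pos_of_pos hkb
    rw [hu, ih, Nat.cast_succ, add_right_comm, Gamma_add_one (by positivity : (k : ℝ) + a ≠ 0),
      add_right_comm, Gamma_add_one hkb.ne']
    field_simp

lemma succ_eq_mul_of_eq_div_one_add_mul_prod {f μ : ℕ → ℝ} (hf : ∀ k, 1 + f k ≠ 0)
    (hμ : ∀ k, μ k = (1 / (1 + f k)) * ∏ l ∈ range k, f l / (1 + f l)) (k : ℕ) :
    μ (k + 1) = μ k * (f k / (1 + f (k + 1))) := by
  rw [hμ, hμ, prod_range_succ]
  field_simp [hf k, hf (k + 1)]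

lemma linear_div_one_add_linear_succ {γ β : ℝ} (hγ : 0 < γ) (hβ : 0 ≤ β) (k : ℕ) :
    (γ * k + β) / (1 + (γ * (k + 1 : ℕ) + β)) = (k + β / γ) / (k + (β + γ + 1) / γ) := by
  push_cast
  field_simp
  ring

theorem mu_linear_gamma_formula_and_asymptotics_general
    (γ β : ℝ) (hγ0 : 0 < γ) (hβ : 0 < β)
    (f : ℕ → ℝ) (hf : ∀ k, f k = γ * k + β)
    (μ : ℕ → ℝ)
    (hμ : ∀ k, μ k = (1 / (1 + f k)) * ∏ l ∈ range k, f l / (1 + f l)) :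
    (∀ k : ℕ, μ k =
      (1 / γ) * (Real.Gamma (k + β / γ) * Real.Gamma ((β + 1) / γ)) /
        (Real.Gamma (k + (β + γ + 1) / γ) * Real.Gamma (β / γ))) ∧
    Tendsto
      (fun k : ℕ => μ k /
        ((Real.Gamma ((β + 1) / γ) / (γ * Real.Gamma (β / γ))) *
          (k : ℝ) ^ (-(1 + 1 / γ))))
      atTop (nhds 1) := by
  set a := β / γ
  set b := (β + γ + 1) / γ
  set c := (β + 1) / γ
  have ha : 0 < a := by positivity
  have hb : 0 < b := by positivity
  have hc : 0 < c := by positivity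
  have hbc : b = c + 1 := by simp only [b, c]; field_simp; ring
  have hstep (k : ℕ) : μ (k + 1) = μ k * ((k + a) / (k + b)) := by
    rw [succ_eq_mul_of_eq_div_one_add_mul_prod (fun k => by rw [hf]; positivity) hμ, hf, hf,
      linear_div_one_add_linear_succ hγ0 hβ.le]
  have hμ0 : μ 0 * Gamma b = 1 / γ * Gamma c := by
    rw [hμ, hf, hbc, Gamma_add_one hc.ne']
    simp only [c]
    field_simp
    ring
  have formula (k : ℕ) : μ k = 1 / γ * (Gamma (k + a) * Gamma c) / (Gamma (k + b) * Gamma a) := by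
    rw [eq_mul_Gamma_div_of_succ_eq_mul ha hb hstep]
    linear_combination Gamma (k + a) / (Gamma (k + b) * Gamma a) * hμ0
  refine ⟨formula, (tendsto_Gamma_nat_add_div_Gamma_nat_add_mul_rpow ha hb).congr' ?_⟩
  filter_upwards [eventually_ge_atTop 1] with n hn
  have hn0 : (0 : ℝ) < n := by exact_mod_cast hn
  have hGa := Gamma_pos_of_pos ha
  have hGc := Gamma_pos_of_pos hc
  have hpow := rpow_pos_of_pos hn0 (b - a)
  rw [formula, show -(1 + 1 / γ) = -(b - a) by simp only [a, b]; field_simp; ring,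
    rpow_neg hn0.le]
  field_simp

/-- For the linear attachment rule `f k = γ k + β`, the measure `μ` has an
explicit Gamma-function formula and satisfies `μ k ~ C k^{-(1+1/γ)}`. -/
theorem mu_linear_gamma_formula_and_asymptotics
    (γ β : ℝ) (hγ0 : 0 < γ) (hγ1 : γ < 1) (hβ : 0 < β)
    (f : ℕ → ℝ) (hf : ∀ k, f k = γ * k + β)
    (μ : ℕ → ℝ)
    (hμ : ∀ k, μ k = (1 / (1 + f k)) * ∏ l ∈ range k, f l / (1 + f l)) :
    (∀ k : ℕ, μ k =
      (1 / γ) * (Real.Gamma (k + β / γ) * Real.Gamma ((β + 1) / γ)) /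
        (Real.Gamma (k + (β + γ + 1) / γ) * Real.Gamma (β / γ))) ∧
    Tendsto
      (fun k : ℕ => μ k /
        ((Real.Gamma ((β + 1) / γ) / (γ * Real.Gamma (β / γ))) *
          (k : ℝ) ^ (-(1 + 1 / γ))))
      atTop (nhds 1) :=
  mu_linear_gamma_formula_and_asymptotics_general γ β hγ0 hβ f hf μ hμ
end

section
/- Let γ > 0, p ∈ ℕ, k ≥ 1, u ≥ 0. Let τ̃_1, …, τ̃_{k+p} be i.i.d. exponential random variables with rate γ. Then P(∑_{j=1}^{k+p} 1{τ̃_j > u} ≤ p) ≤ exp(p/4) · exp(−(k/8)·e^{−γu}). -/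
/-!
Write `q = e^{-γu}` for the common probability of the events `{τ̃_j > u}`. If `kq ≤ 2p` the
right side is at least `1`. Otherwise the Chernoff bound at `t = -log 2`, together with
`mgf(1_A)(t) = 1 + P(A)(e^t - 1) ≤ exp (P(A)(e^t - 1))`, gives
`P(∑ 1{τ̃_j > u} ≤ p) ≤ 2^p e^{-(k+p)q/2}`, and `2p < kq` bounds the exponent
`p log 2 - (k+p)q/2` by `p/4 - kq/8`.
-/

open MeasureTheory ProbabilityTheory Real Finset

namespace ProbabilityTheory

variable {Ω : Type*} [MeasurableSpace Ω] {μ : Measure Ω} [IsProbabilityMeasure μ]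

lemma mgf_indicator_one {A : Set Ω} (hA : MeasurableSet A) (t : ℝ) :
    mgf (A.indicator 1) μ t = 1 + μ.real A * (exp t - 1) := by
  have h : (fun ω => exp (t * A.indicator 1 ω)) =
      fun ω => 1 + A.indicator (fun _ => exp t - 1) ω := by
    funext ω
    by_cases hω : ω ∈ A <;> simp [hω]
  rw [mgf, h, integral_add (integrable_const _) ((integrable_const _).indicator hA),
    integral_const, integral_indicator_const _ hA]
  simp

lemma mgf_indicator_one_le_exp {A : Set Ω} (hA : MeasurableSet A) (t : ℝ) :
    mgf (A.indicator 1) μ t ≤ exp (μ.real A * (exp t - 1)) := by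
  rw [mgf_indicator_one hA, add_comm]
  exact add_one_le_exp _

theorem measureReal_sum_indicator_le_le {ι : Type*} [Fintype ι] {A : ι → Set Ω}
    (hA : ∀ i, MeasurableSet (A i))
    (h_indep : iIndepFun (fun i => (A i).indicator (1 : Ω → ℝ)) μ) {t : ℝ} (ht : t ≤ 0)
    (x : ℝ) :
    μ.real {ω | (∑ i, (A i).indicator 1) ω ≤ x} ≤
      exp (-t * x + (∑ i, μ.real (A i)) * (exp t - 1)) := by
  have h_meas : ∀ i, Measurable ((A i).indicator (1 : Ω → ℝ)) :=
    fun i => measurable_const.indicator (hA i)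
  have h_int : Integrable (fun ω => exp (t * (∑ i, (A i).indicator 1) ω)) μ :=
    h_indep.integrable_exp_mul_sum h_meas fun i _ =>
      integrable_exp_mul_of_mem_Icc (a := 0) (b := 1) (h_meas i).aemeasurable
        (ae_of_all _ fun ω => by by_cases hω : ω ∈ A i <;> simp [hω])
  calc μ.real {ω | (∑ i, (A i).indicator 1) ω ≤ x}
      ≤ exp (-t * x) * ∏ i, mgf ((A i).indicator 1) μ t := by
        rw [← h_indep.mgf_sum h_meas]
        exact measure_le_le_exp_mul_mgf x ht h_int
    _ ≤ exp (-t * x) * ∏ i, exp (μ.real (A i) * (exp t - 1)) := by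
        gcongr with i
        · exact fun i _ => mgf_nonneg
        · exact mgf_indicator_one_le_exp (hA i) t
    _ = exp (-t * x + (∑ i, μ.real (A i)) * (exp t - 1)) := by
        rw [← exp_sum, ← exp_add, sum_mul]

end ProbabilityTheory

lemma mul_log_two_sub_le {p k q : ℝ} (hp : 0 ≤ p) (hq : 0 ≤ q) (hpq : 2 * p < k * q) :
    p * log 2 - (k + p) * q / 2 ≤ p / 4 - k / 8 * q := by
  nlinarith [log_two_lt_d9, mul_nonneg hp hq]

theorem indicator_sum_lower_tail_general
    {Ω : Type*} [MeasurableSpace Ω] (P : Measure Ω) [IsProbabilityMeasure P]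
    (γ : ℝ) (p k : ℕ) (u : ℝ) (hu : 0 ≤ u)
    (τtilde : Fin (k + p) → Ω → ℝ)
    (hmeas : ∀ i, Measurable (τtilde i))
    (hindep : iIndepFun τtilde P)
    (hexp : ∀ i, ∀ t : ℝ, 0 ≤ t →
      P {ω | t < τtilde i ω} = ENNReal.ofReal (Real.exp (-γ * t))) :
    P {ω | (∑ j : Fin (k + p), if u < τtilde j ω then (1 : ℕ) else 0) ≤ p} ≤
      ENNReal.ofReal (Real.exp ((p : ℝ) / 4) *
        Real.exp (-((k : ℝ) / 8) * Real.exp (-γ * u))) := by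
  set q := exp (-γ * u)
  set A : Fin (k + p) → Set Ω := fun j => τtilde j ⁻¹' Set.Ioi u
  have hA j : MeasurableSet (A j) := hmeas j measurableSet_Ioi
  have hPA j : P.real (A j) = q := by
    simp [measureReal_def, A, Set.preimage, hexp j u hu, q, (exp_pos _).le]
  have h_indep : iIndepFun (fun j => (A j).indicator (1 : Ω → ℝ)) P :=
    hindep.comp _ fun _ => measurable_const.indicator measurableSet_Ioi
  have hevent : {ω | (∑ j : Fin (k + p), if u < τtilde j ω then (1 : ℕ) else 0) ≤ p}
      = {ω | (∑ j, (A j).indicator 1) ω ≤ (p : ℝ)} := by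
    ext ω
    simp only [Set.mem_ofPred_eq, Finset.sum_apply, ← Nat.cast_le (α := ℝ), Nat.cast_sum]
    congr! with j
    by_cases h : u < τtilde j ω <;> simp [A, h]
  rw [← exp_add]
  by_cases hpq : (k : ℝ) * q ≤ 2 * p
  · exact prob_le_one.trans (ENNReal.one_le_ofReal.2 (one_le_exp (by nlinarith)))
  rw [hevent, ← ofReal_measureReal]
  refine ENNReal.ofReal_le_ofReal
    ((measureReal_sum_indicator_le_le hA h_indep (neg_nonpos.2 (log_nonneg one_le_two)) p).trans ?_)
  simp only [hPA, sum_const, card_univ, Fintype.card_fin, nsmul_eq_mul, Nat.cast_add, exp_neg,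
    exp_log two_pos]
  exact exp_le_exp.2
    (by linarith [mul_log_two_sub_le (Nat.cast_nonneg p) (exp_pos _).le (not_le.1 hpq)])

/-- For i.i.d. exponential rate-`γ` variables `τ̃_1, …, τ̃_{k+p}`,
`P(∑ 1{τ̃_j > u} ≤ p) ≤ exp(p/4)·exp(−(k/8)·e^{−γu})`. -/
theorem indicator_sum_lower_tail
    {Ω : Type*} [MeasurableSpace Ω] (P : Measure Ω) [IsProbabilityMeasure P]
    (γ : ℝ) (hγ : 0 < γ) (p k : ℕ) (hk : 1 ≤ k) (u : ℝ) (hu : 0 ≤ u)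
    (τtilde : Fin (k + p) → Ω → ℝ)
    (hmeas : ∀ i, Measurable (τtilde i))
    (hindep : iIndepFun τtilde P)
    (hexp : ∀ i, ∀ t : ℝ, 0 ≤ t →
      P {ω | t < τtilde i ω} = ENNReal.ofReal (Real.exp (-γ * t))) :
    P {ω | (∑ j : Fin (k + p), if u < τtilde j ω then (1 : ℕ) else 0) ≤ p} ≤
      ENNReal.ofReal (Real.exp ((p : ℝ) / 4) *
        Real.exp (-((k : ℝ) / 8) * Real.exp (-γ * u))) :=
  indicator_sum_lower_tail_general P γ p k u hu τtilde hmeas hindep hexp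
end

section
/- Consider the Markov chain on ℕ that jumps from k to k+1 with rate f(k) and from k to 0 with rate 1, where f : ℕ → (0,∞) is non-decreasing with f(k)/k → γ ∈ [0,1). Then the measure μ(k) = (1/(1+f(k))) ∏_{l=0}^{k-1} f(l)/(1+f(l)) is the unique invariant probability measure of this chain. -/
/-!
Write `P k = ∏_{l<k} f l / (1 + f l)` for the probability that the chain started at `0` climbs
to `k` before its first reset. Then `μ k = P k / (1 + f k) = P k - P (k + 1)`, so the partial
sums of `μ` telescope to `1 - P n`. Since `f l / (1 + f l) ≤ exp (-(1 + f l)⁻¹)` and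
`f = O(k)` makes `∑ (1 + f l)⁻¹` diverge like the harmonic series, `P n → 0` and `μ` has mass
`1`. Uniqueness: the balance equations for `k ≥ 1` force `ν k (1 + f k) = ν 0 (1 + f 0) P k`,
and the balance equation at `0` together with `∑ ν = 1` pins `ν 0 (1 + f 0) = 1`.
-/

open Finset Filter Asymptotics

theorem isBigO_natCast_of_tendsto_div {f : ℕ → ℝ} {γ : ℝ}
    (hlim : Tendsto (fun k : ℕ => f k / k) atTop (nhds γ)) :
    f =O[atTop] fun k => (k : ℝ) :=
  isBigO_of_div_tendsto_nhds ((eventually_ne_atTop 0).mono fun k hk h => by simp_all) γ hlim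

theorem not_summable_inv_one_add_of_isBigO {f : ℕ → ℝ} (hf : ∀ k, 0 ≤ f k)
    (hO : f =O[atTop] fun k => (k : ℝ)) : ¬ Summable fun k => (1 + f k)⁻¹ := by
  intro hsum
  have hone : (fun _ : ℕ => (1 : ℝ)) =O[atTop] fun k => (k : ℝ) :=
    (isBigO_const_left_iff_pos_le_norm one_ne_zero).2
      ⟨1, one_pos, (eventually_ge_atTop 1).mono fun k hk => by simpa using hk⟩
  have hinv : (fun k : ℕ => (k : ℝ)⁻¹) =O[atTop] fun k => (1 + f k)⁻¹ :=
    (hone.add hO).inv_rev (Eventually.of_forall fun k hk => by linarith [hf k])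
  exact Real.not_summable_natCast_inv (summable_of_isBigO_nat hsum hinv)

noncomputable def climbProb (f : ℕ → ℝ) (k : ℕ) : ℝ := ∏ l ∈ range k, f l / (1 + f l)

namespace climbProb

variable {f : ℕ → ℝ}

@[simp]
theorem zero : climbProb f 0 = 1 := prod_range_zero _

theorem succ (k : ℕ) : climbProb f (k + 1) = climbProb f k * (f k / (1 + f k)) :=
  prod_range_succ _ k

theorem nonneg (hf : ∀ k, 0 ≤ f k) (k : ℕ) : 0 ≤ climbProb f k :=
  prod_nonneg fun l _ => div_nonneg (hf l) (by linarith [hf l])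

theorem sub_succ (hf : ∀ k, 0 ≤ f k) (k : ℕ) :
    climbProb f k - climbProb f (k + 1) = climbProb f k / (1 + f k) := by
  have : 1 + f k ≠ 0 := by linarith [hf k]
  rw [succ]
  field_simp
  ring

theorem le_exp_neg_sum (hf : ∀ k, 0 ≤ f k) (n : ℕ) :
    climbProb f n ≤ Real.exp (-∑ l ∈ range n, (1 + f l)⁻¹) := by
  rw [← sum_neg_distrib, Real.exp_sum]
  refine prod_le_prod (fun l _ => div_nonneg (hf l) (by linarith [hf l])) fun l _ => ?_
  have : f l / (1 + f l) = 1 - (1 + f l)⁻¹ := by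
    field_simp [show 1 + f l ≠ 0 by linarith [hf l]]
    ring
  rw [this]
  exact Real.one_sub_le_exp_neg _

theorem tendsto_zero (hf : ∀ k, 0 ≤ f k) (hdiv : ¬ Summable fun k => (1 + f k)⁻¹) :
    Tendsto (climbProb f) atTop (nhds 0) := by
  have hsum : Tendsto (fun n => ∑ l ∈ range n, (1 + f l)⁻¹) atTop atTop :=
    (not_summable_iff_tendsto_nat_atTop_of_nonneg
      fun l => inv_nonneg.2 (by linarith [hf l])).1 hdiv
  exact squeeze_zero (nonneg hf) (le_exp_neg_sum hf)
    (Real.tendsto_exp_atBot.comp (tendsto_neg_atTop_atBot.comp hsum))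

theorem hasSum_div_one_add (hf : ∀ k, 0 ≤ f k) (hdiv : ¬ Summable fun k => (1 + f k)⁻¹) :
    HasSum (fun k => climbProb f k / (1 + f k)) 1 := by
  refine (hasSum_iff_tendsto_nat_of_nonneg
    (fun k => div_nonneg (climbProb.nonneg hf k) (by linarith [hf k])) 1).2 ?_
  have hpartial : ∀ n, ∑ k ∈ range n, climbProb f k / (1 + f k) = 1 - climbProb f n := by
    intro n
    simp_rw [← sub_succ hf]
    rw [sum_range_sub', zero]
  simpa only [hpartial, sub_zero] using (tendsto_zero hf hdiv).const_sub (1 : ℝ)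

theorem div_one_add_balance (hf : ∀ k, 0 ≤ f k) (k : ℕ) :
    climbProb f (k + 1) / (1 + f (k + 1)) * (1 + f (k + 1)) =
      climbProb f k / (1 + f k) * f k := by
  have : 1 + f k ≠ 0 := by linarith [hf k]
  have : 1 + f (k + 1) ≠ 0 := by linarith [hf (k + 1)]
  rw [succ]
  field_simp

theorem mul_one_add_eq_of_balance (hf : ∀ k, 0 ≤ f k) {ν : ℕ → ℝ}
    (hν : ∀ k, ν (k + 1) * (1 + f (k + 1)) = ν k * f k) (k : ℕ) :
    ν k * (1 + f k) = ν 0 * (1 + f 0) * climbProb f k := by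
  induction k with
  | zero => simp
  | succ k ih =>
    have : 1 + f k ≠ 0 := by linarith [hf k]
    calc ν (k + 1) * (1 + f (k + 1)) = ν k * (1 + f k) * (f k / (1 + f k)) := by
          rw [hν]; field_simp
      _ = ν 0 * (1 + f 0) * climbProb f (k + 1) := by rw [ih, succ, mul_assoc]

end climbProb

theorem mu_unique_invariant_measure_general
    (f : ℕ → ℝ) (γ : ℝ)
    (hpos : ∀ k, 0 < f k)
    (hlim : Tendsto (fun k : ℕ => f k / k) atTop (nhds γ))
    (μ : ℕ → ℝ)
    (hμ : ∀ k, μ k = (1 / (1 + f k)) * ∏ l ∈ range k, f l / (1 + f l)) :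
    -- μ is an invariant probability measure
    ((∀ k, 0 ≤ μ k) ∧ (∑' k : ℕ, μ k) = 1 ∧
      (∀ k : ℕ, μ (k + 1) * (1 + f (k + 1)) = μ k * f k) ∧
      μ 0 * (1 + f 0) = ∑' k : ℕ, μ k) ∧
    -- and it is the unique one
    (∀ ν : ℕ → ℝ, (∀ k, 0 ≤ ν k) → (∑' k : ℕ, ν k) = 1 →
      (∀ k : ℕ, ν (k + 1) * (1 + f (k + 1)) = ν k * f k) →
      ν 0 * (1 + f 0) = (∑' k : ℕ, ν k) → ν = μ) := by
  have hf : ∀ k, 0 ≤ f k := fun k => (hpos k).le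
  have hμ' : μ = fun k => climbProb f k / (1 + f k) :=
    funext fun k => (hμ k).trans (one_div_mul_eq_div _ _)
  subst hμ'
  have hsum := climbProb.hasSum_div_one_add hf
    (not_summable_inv_one_add_of_isBigO hf (isBigO_natCast_of_tendsto_div hlim))
  refine ⟨⟨fun k => div_nonneg (climbProb.nonneg hf k) (by linarith [hf k]), hsum.tsum_eq,
    climbProb.div_one_add_balance hf, by
      rw [hsum.tsum_eq]; exact (div_mul_cancel₀ _ (by linarith [hf 0])).trans climbProb.zero⟩, ?_⟩
  intro ν _ hνsum hνbal hν0
  funext k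
  have hνk := climbProb.mul_one_add_eq_of_balance hf hνbal k
  rw [hν0, hνsum, one_mul] at hνk
  exact eq_div_of_mul_eq (by linarith [hf k]) hνk

/-- For the Markov chain on ℕ jumping from `k` to `k+1` with rate `f k` and
from `k` to `0` with rate `1`, the measure `μ k = (1/(1+f k)) ∏_{l<k} f l/(1+f l)` is the
unique invariant probability measure. Invariance is expressed by the balance equations
`μ k (1 + f k) = μ (k-1) f (k-1)` for `k ≥ 1` and `μ 0 (1 + f 0) = ∑_j μ j`. -/
theorem mu_unique_invariant_measure
    (f : ℕ → ℝ) (γ : ℝ)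
    (hpos : ∀ k, 0 < f k) (hmono : Monotone f)
    (hγ0 : 0 ≤ γ) (hγ1 : γ < 1)
    (hlim : Tendsto (fun k : ℕ => f k / k) atTop (nhds γ))
    (μ : ℕ → ℝ)
    (hμ : ∀ k, μ k = (1 / (1 + f k)) * ∏ l ∈ range k, f l / (1 + f l)) :
    -- μ is an invariant probability measure
    ((∀ k, 0 ≤ μ k) ∧ (∑' k : ℕ, μ k) = 1 ∧
      (∀ k : ℕ, μ (k + 1) * (1 + f (k + 1)) = μ k * f k) ∧
      μ 0 * (1 + f 0) = ∑' k : ℕ, μ k) ∧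
    -- and it is the unique one
    (∀ ν : ℕ → ℝ, (∀ k, 0 ≤ ν k) → (∑' k : ℕ, ν k) = 1 →
      (∀ k : ℕ, ν (k + 1) * (1 + f (k + 1)) = ν k * f k) →
      ν 0 * (1 + f 0) = (∑' k : ℕ, ν k) → ν = μ) :=
  mu_unique_invariant_measure_general f γ hpos hlim μ hμ
end

section
/- Let φ : [0,∞) → [0,1] be non-increasing with generalized inverse φ^{-1}(u) := inf{x > 0 : φ(x) < u}. Then for any z ≥ 0, ∫_0^{φ(z)} φ^{-1}(u) du = ∫_0^∞ φ(z ∨ v) dv, both sides equaling the Lebesgue area of {(u,v) ∈ (0,∞)² : u ≤ φ(z), v ≤ φ^{-1}(u)} ∪-type region {(u,v) : u ≤ φ(z) and u ≤ φ(v)}. -/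
/-!
Both sides are the area of `R = {(u, v) | 0 < u ≤ φ z, 0 < v, u ≤ φ v}`, computed by Tonelli in
the two orders. The slice of `R` at height `u` is the superlevel set `{v > 0 | φ v ≥ u}`, which
by monotonicity is an interval of length `φ⁻¹(u)`; integrability forces `φ` below every `u > 0`,
so this length is finite. The slice at abscissa `v` is `(0, min (φ z) (φ v)]`, and
`min (φ z) (φ v) = φ (z ∨ v)` since `φ` is non-increasing.
-/

open MeasureTheory Set

namespace GeneralizedInverse

noncomputable def genInv (φ : ℝ → ℝ) (u : ℝ) : ℝ := sInf {x | 0 < x ∧ φ x < u}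

/-- The subgraph of `min c φ` over `(0, ∞)`, with the axes swapped. -/
def region (φ : ℝ → ℝ) (c : ℝ) : Set (ℝ × ℝ) := {p | 0 < p.1 ∧ 0 < p.2 ∧ p.1 ≤ c ∧ p.1 ≤ φ p.2}

variable {φ : ℝ → ℝ} {u : ℝ}

lemma bddBelow_setOf_lt (u : ℝ) : BddBelow {x | 0 < x ∧ φ x < u} :=
  ⟨0, fun _ hx => hx.1.le⟩

lemma genInv_nonneg : 0 ≤ genInv φ u :=
  Real.sInf_nonneg fun _ hx => hx.1.le

lemma nonempty_setOf_lt_of_integrableOn (hint : IntegrableOn φ (Ioi 0)) (hu : 0 < u) :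
    {x | 0 < x ∧ φ x < u}.Nonempty := by
  by_contra hempty
  have hsub : Ioi 0 ⊆ {x | u ≤ φ x} := fun x hx =>
    not_lt.1 fun hlt => hempty ⟨x, hx, hlt⟩
  have hfin := hint.measure_ge_lt_top hu
  rw [Measure.restrict_apply_superset hsub, Real.volume_Ioi] at hfin
  exact hfin.ne rfl

lemma antitoneOn_genInv (hne : ∀ u, 0 < u → {x | 0 < x ∧ φ x < u}.Nonempty) :
    AntitoneOn (genInv φ) (Ioi 0) := fun u hu _ _ huu' =>
  csInf_le_csInf (bddBelow_setOf_lt _) (hne u hu) fun _ hx => ⟨hx.1, hx.2.trans_le huu'⟩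

lemma Ioo_genInv_subset : Ioo 0 (genInv φ u) ⊆ {v | 0 < v ∧ u ≤ φ v} := fun _ hv =>
  ⟨hv.1, not_lt.1 fun hlt => (csInf_le (bddBelow_setOf_lt u) ⟨hv.1, hlt⟩).not_gt hv.2⟩

lemma setOf_le_subset_Ioc_genInv (hanti : AntitoneOn φ (Ioi 0))
    (hne : {x | 0 < x ∧ φ x < u}.Nonempty) :
    {v | 0 < v ∧ u ≤ φ v} ⊆ Ioc 0 (genInv φ u) := fun _ hv =>
  ⟨hv.1, le_csInf hne fun _ hx => not_lt.1 fun hxv =>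
    (hv.2.trans (hanti hx.1 hv.1 hxv.le)).not_gt hx.2⟩

lemma volume_setOf_le_eq_genInv (hanti : AntitoneOn φ (Ioi 0))
    (hne : {x | 0 < x ∧ φ x < u}.Nonempty) :
    volume {v | 0 < v ∧ u ≤ φ v} = ENNReal.ofReal (genInv φ u) := by
  apply le_antisymm
  · simpa using measure_mono (μ := volume) (setOf_le_subset_Ioc_genInv hanti hne)
  · simpa using measure_mono (μ := volume) (Ioo_genInv_subset (φ := φ) (u := u))

lemma measurableSet_region (hmeas : Measurable φ) (c : ℝ) : MeasurableSet (region φ c) :=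
  (measurableSet_lt measurable_const measurable_fst).inter <|
    (measurableSet_lt measurable_const measurable_snd).inter <|
      (measurableSet_le measurable_fst measurable_const).inter
        (measurableSet_le measurable_fst (hmeas.comp measurable_snd))

lemma volume_region_eq_lintegral_genInv (hmeas : Measurable φ) (hanti : AntitoneOn φ (Ioi 0))
    (hne : ∀ u, 0 < u → {x | 0 < x ∧ φ x < u}.Nonempty) (c : ℝ) :
    volume (region φ c) = ∫⁻ u in Ioc 0 c, ENNReal.ofReal (genInv φ u) := by
  have hsection : ∀ u, volume (Prod.mk u ⁻¹' region φ c) =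
      (Ioc 0 c).indicator (fun u => ENNReal.ofReal (genInv φ u)) u := by
    intro u
    by_cases hu : u ∈ Ioc 0 c
    · have hslice : Prod.mk u ⁻¹' region φ c = {v | 0 < v ∧ u ≤ φ v} := by
        ext v
        simp [region, hu.1, hu.2]
      rw [hslice, volume_setOf_le_eq_genInv hanti (hne u hu.1), indicator_of_mem hu]
    · have hslice : Prod.mk u ⁻¹' region φ c = ∅ :=
        eq_empty_of_forall_notMem fun v hv => hu ⟨hv.1, hv.2.2.1⟩
      rw [hslice, indicator_of_notMem hu, measure_empty]
  rw [Measure.volume_eq_prod, Measure.prod_apply (measurableSet_region hmeas c)]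
  simp only [hsection, lintegral_indicator measurableSet_Ioc]

lemma volume_region_eq_lintegral_min (hmeas : Measurable φ) (c : ℝ) :
    volume (region φ c) = ∫⁻ v in Ioi 0, ENNReal.ofReal (min c (φ v)) := by
  have hsection : ∀ v, volume ((fun u => (u, v)) ⁻¹' region φ c) =
      (Ioi 0).indicator (fun v => ENNReal.ofReal (min c (φ v))) v := by
    intro v
    by_cases hv : v ∈ Ioi 0
    · have hslice : (fun u => (u, v)) ⁻¹' region φ c = Ioc 0 (min c (φ v)) := by
        ext u
        simp [region, mem_Ioi.1 hv]
      rw [hslice, Real.volume_Ioc, sub_zero, indicator_of_mem hv]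
    · have hslice : (fun u => (u, v)) ⁻¹' region φ c = ∅ :=
        eq_empty_of_forall_notMem fun u hu => hv hu.2.1
      rw [hslice, indicator_of_notMem hv, measure_empty]
  rw [Measure.volume_eq_prod, Measure.prod_apply_symm (measurableSet_region hmeas c)]
  simp only [hsection, lintegral_indicator measurableSet_Ioi]

lemma integral_genInv_eq_volume_region (hmeas : Measurable φ) (hanti : AntitoneOn φ (Ioi 0))
    (hne : ∀ u, 0 < u → {x | 0 < x ∧ φ x < u}.Nonempty) (c : ℝ) :
    ∫ u in Ioo 0 c, genInv φ u = (volume (region φ c)).toReal := by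
  have hmeas_inv : AEStronglyMeasurable (genInv φ) (volume.restrict (Ioo 0 c)) :=
    (aemeasurable_restrict_of_antitoneOn measurableSet_Ioo
      ((antitoneOn_genInv hne).mono Ioo_subset_Ioi_self)).aestronglyMeasurable
  rw [integral_eq_lintegral_of_nonneg_ae (.of_forall fun _ => genInv_nonneg) hmeas_inv,
    volume_region_eq_lintegral_genInv hmeas hanti hne, setLIntegral_congr Ioo_ae_eq_Ioc]

lemma integral_min_eq_volume_region (hmeas : Measurable φ) (hφ : ∀ x, 0 < x → 0 ≤ φ x)
    {c : ℝ} (hc : 0 ≤ c) :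
    ∫ v in Ioi 0, min c (φ v) = (volume (region φ c)).toReal := by
  have hnonneg : 0 ≤ᵐ[volume.restrict (Ioi 0)] fun v => min c (φ v) :=
    (ae_restrict_iff' measurableSet_Ioi).2 (.of_forall fun v hv => le_min hc (hφ v hv))
  rw [integral_eq_lintegral_of_nonneg_ae hnonneg
      (measurable_const.min hmeas).aestronglyMeasurable,
    volume_region_eq_lintegral_min hmeas]

end GeneralizedInverse

open GeneralizedInverse in
theorem inverse_integral_eq_max_integral_general
    (φ : ℝ → ℝ)
    (hanti : AntitoneOn φ (Ici 0))
    (h0 : ∀ x, 0 ≤ x → 0 ≤ φ x)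
    (hmeas : Measurable φ)
    (hint : Integrable (fun x => φ x) (volume.restrict (Ioi (0 : ℝ))))
    (φinv : ℝ → ℝ)
    (hφinv : ∀ u, φinv u = sInf {x : ℝ | 0 < x ∧ φ x < u})
    (z : ℝ) (hz : 0 ≤ z) :
    (∫ u in Ioo (0 : ℝ) (φ z), φinv u = ∫ v in Ioi (0 : ℝ), φ (max z v)) ∧
    ∫ u in Ioo (0 : ℝ) (φ z), φinv u =
      (volume {p : ℝ × ℝ | 0 < p.1 ∧ 0 < p.2 ∧ p.1 ≤ φ z ∧ p.1 ≤ φ p.2}).toReal := by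
  obtain rfl : φinv = genInv φ := funext hφinv
  have hanti' : AntitoneOn φ (Ioi 0) := hanti.mono Ioi_subset_Ici_self
  have hne := fun u (hu : 0 < u) => nonempty_setOf_lt_of_integrableOn hint hu
  have hleft := integral_genInv_eq_volume_region hmeas hanti' hne (φ z)
  have hright : ∫ v in Ioi 0, φ (max z v) = (volume (region φ (φ z))).toReal := by
    rw [← integral_min_eq_volume_region hmeas (fun x hx => h0 x hx.le) (h0 z hz)]
    exact setIntegral_congr_fun measurableSet_Ioi fun v hv =>
      hanti.map_max (mem_Ici.2 hz) (mem_Ici.2 (le_of_lt hv))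
  exact ⟨hleft.trans hright.symm, hleft⟩

/-- For non-increasing `φ : [0,∞) → [0,1]` with generalized inverse
`φ⁻¹(u) = inf{x > 0 : φ x < u}`, for any `z ≥ 0`:
`∫_0^{φ(z)} φ⁻¹(u) du = ∫_0^∞ φ(z ∨ v) dv`, both equal to the area of
`{(u,v) ∈ (0,∞)² : u ≤ φ z ∧ u ≤ φ v}`. -/
theorem inverse_integral_eq_max_integral
    (φ : ℝ → ℝ)
    (hanti : AntitoneOn φ (Ici 0))
    (h0 : ∀ x, 0 ≤ x → 0 ≤ φ x) (h1 : ∀ x, 0 ≤ x → φ x ≤ 1)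
    (hmeas : Measurable φ)
    (hint : Integrable (fun x => φ x) (volume.restrict (Ioi (0 : ℝ))))
    (φinv : ℝ → ℝ)
    (hφinv : ∀ u, φinv u = sInf {x : ℝ | 0 < x ∧ φ x < u})
    (z : ℝ) (hz : 0 ≤ z) :
    (∫ u in Ioo (0 : ℝ) (φ z), φinv u = ∫ v in Ioi (0 : ℝ), φ (max z v)) ∧
    ∫ u in Ioo (0 : ℝ) (φ z), φinv u =
      (volume {p : ℝ × ℝ | 0 < p.1 ∧ 0 < p.2 ∧ p.1 ≤ φ z ∧ p.1 ≤ φ p.2}).toReal :=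
  inverse_integral_eq_max_integral_general φ hanti h0 hmeas hint φinv hφinv z hz
end

section
/- Let φ : [0,∞) → [0,1] be non-increasing, integrable, and define I(a) := 2∫_0^a v φ(v) dv + a ∫_a^∞ φ(v) dv for a > 0. If ∫_0^∞ v φ(v) dv < ∞, then I(a) ≍ a ∧ 1, i.e., there exist constants 0 < c ≤ C such that c(a ∧ 1) ≤ I(a) ≤ C(a ∧ 1) for all a > 0. -/
/-!
Both terms of `I(a)` are nonnegative and together they make up
`J(a) = ∫_0^∞ min(v, a) φ(v) dv` (`truncatedMoment φ a`), the first one counted twice,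
so `J(a) ≤ I(a) ≤ 2 J(a)`. The weight `min(v, a)` is at most `a` and at most `v`, which gives
`J(a) ≤ max(∫ φ, ∫ v φ) (a ∧ 1)`; and `min(v, a) ≥ (a ∧ 1) min(v, 1)` gives
`J(a) ≥ (a ∧ 1) J(1)`, where `J(1) > 0` because `φ ≥ 0` has positive integral.
-/

open MeasureTheory Set

noncomputable def truncatedMoment (f : ℝ → ℝ) (a : ℝ) : ℝ :=
  ∫ v in Ioi 0, min v a * f v

lemma min_mul_min_one_le_min {a v : ℝ} (ha : 0 ≤ a) (hv : 0 ≤ v) :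
    min a 1 * min v 1 ≤ min v a := by
  rcases le_total a 1 with ha1 | ha1 <;> rcases le_total v 1 with hv1 | hv1 <;>
    rcases le_total v a with hva | hva <;>
    simp only [min_eq_left, min_eq_right, ha1, hv1, hva] <;> nlinarith

section TruncatedMoment

variable {f : ℝ → ℝ} {a : ℝ}

lemma integrableOn_min_mul (ha : 0 ≤ a) (hf : IntegrableOn f (Ioi 0))
    (hvf : IntegrableOn (fun v => v * f v) (Ioi 0)) :
    IntegrableOn (fun v => min v a * f v) (Ioi 0) := by
  rw [← Ioc_union_Ioi_eq_Ioi ha]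
  refine IntegrableOn.union ?_ ?_
  · exact (hvf.mono_set Ioc_subset_Ioi_self).congr_fun
      (fun v hv => by rw [min_eq_left hv.2]) measurableSet_Ioc
  · exact IntegrableOn.congr_fun ((hf.mono_set (Ioi_subset_Ioi ha)).const_mul a)
      (fun v hv => by rw [min_eq_right (le_of_lt hv)]) measurableSet_Ioi

lemma truncatedMoment_eq (ha : 0 ≤ a) (hf : IntegrableOn f (Ioi 0))
    (hvf : IntegrableOn (fun v => v * f v) (Ioi 0)) :
    truncatedMoment f a = (∫ v in Ioc 0 a, v * f v) + a * ∫ v in Ioi a, f v := by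
  have hint := integrableOn_min_mul ha hf hvf
  rw [← Ioc_union_Ioi_eq_Ioi ha] at hint
  rw [truncatedMoment, ← Ioc_union_Ioi_eq_Ioi ha,
    setIntegral_union (Ioc_disjoint_Ioi le_rfl) measurableSet_Ioi
      (hint.mono_set subset_union_left) (hint.mono_set subset_union_right), ← integral_const_mul]
  congr 1
  · exact setIntegral_congr_fun measurableSet_Ioc fun v hv => by rw [min_eq_left hv.2]
  · exact setIntegral_congr_fun measurableSet_Ioi fun v hv => by rw [min_eq_right (le_of_lt hv)]

lemma truncatedMoment_le_mul_integral (ha : 0 ≤ a) (hf0 : ∀ v, 0 < v → 0 ≤ f v)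
    (hf : IntegrableOn f (Ioi 0)) (hvf : IntegrableOn (fun v => v * f v) (Ioi 0)) :
    truncatedMoment f a ≤ a * ∫ v in Ioi 0, f v := by
  rw [← integral_const_mul]
  exact setIntegral_mono_on (integrableOn_min_mul ha hf hvf) (hf.const_mul a) measurableSet_Ioi
    fun v hv => mul_le_mul_of_nonneg_right (min_le_right _ _) (hf0 v hv)

lemma truncatedMoment_le_integral_mul (ha : 0 ≤ a) (hf0 : ∀ v, 0 < v → 0 ≤ f v)
    (hf : IntegrableOn f (Ioi 0)) (hvf : IntegrableOn (fun v => v * f v) (Ioi 0)) :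
    truncatedMoment f a ≤ ∫ v in Ioi 0, v * f v :=
  setIntegral_mono_on (integrableOn_min_mul ha hf hvf) hvf measurableSet_Ioi
    fun v hv => mul_le_mul_of_nonneg_right (min_le_left _ _) (hf0 v hv)

lemma truncatedMoment_le_mul_min (ha : 0 ≤ a) (hf0 : ∀ v, 0 < v → 0 ≤ f v)
    (hf : IntegrableOn f (Ioi 0)) (hvf : IntegrableOn (fun v => v * f v) (Ioi 0)) :
    truncatedMoment f a ≤ max (∫ v in Ioi 0, f v) (∫ v in Ioi 0, v * f v) * min a 1 := by
  rcases le_total a 1 with ha1 | ha1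
  · rw [min_eq_left ha1, mul_comm]
    exact (truncatedMoment_le_mul_integral ha hf0 hf hvf).trans
      (mul_le_mul_of_nonneg_left (le_max_left _ _) ha)
  · rw [min_eq_right ha1, mul_one]
    exact (truncatedMoment_le_integral_mul ha hf0 hf hvf).trans (le_max_right _ _)

lemma min_mul_truncatedMoment_one_le (ha : 0 ≤ a) (hf0 : ∀ v, 0 < v → 0 ≤ f v)
    (hf : IntegrableOn f (Ioi 0)) (hvf : IntegrableOn (fun v => v * f v) (Ioi 0)) :
    min a 1 * truncatedMoment f 1 ≤ truncatedMoment f a := by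
  rw [truncatedMoment, truncatedMoment, ← integral_const_mul]
  refine setIntegral_mono_on ((integrableOn_min_mul zero_le_one hf hvf).const_mul _)
    (integrableOn_min_mul ha hf hvf) measurableSet_Ioi fun v hv => ?_
  rw [← mul_assoc]
  exact mul_le_mul_of_nonneg_right (min_mul_min_one_le_min ha (le_of_lt hv)) (hf0 v hv)

lemma truncatedMoment_pos (ha : 0 < a) (hf0 : ∀ v, 0 < v → 0 ≤ f v)
    (hf : IntegrableOn f (Ioi 0)) (hvf : IntegrableOn (fun v => v * f v) (Ioi 0))
    (hpos : 0 < ∫ v in Ioi 0, f v) : 0 < truncatedMoment f a := by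
  have hnonneg : ∀ g : ℝ → ℝ, (∀ v, 0 < v → 0 ≤ g v) → 0 ≤ᵐ[volume.restrict (Ioi 0)] g :=
    fun g hg => (ae_restrict_iff' measurableSet_Ioi).2 (ae_of_all _ hg)
  have hsupport : Function.support (fun v => min v a * f v) ∩ Ioi 0 =
      Function.support f ∩ Ioi 0 := by
    ext v
    simp only [mem_inter_iff, Function.mem_support, mem_Ioi, mul_ne_zero_iff]
    exact ⟨fun h => ⟨h.1.2, h.2⟩, fun h => ⟨⟨(lt_min h.2 ha).ne', h.1⟩, h.2⟩⟩
  rw [setIntegral_pos_iff_support_of_nonneg_ae (hnonneg f hf0) hf] at hpos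
  rw [truncatedMoment, setIntegral_pos_iff_support_of_nonneg_ae
    (hnonneg _ fun v hv => mul_nonneg (lt_min hv ha).le (hf0 v hv))
    (integrableOn_min_mul ha.le hf hvf), hsupport]
  exact hpos

end TruncatedMoment

theorem I_asymptotics_integrable_case_general
    (φ : ℝ → ℝ)
    (h0 : ∀ x, 0 ≤ x → 0 ≤ φ x)
    (hint : ∫ x in Ioi (0 : ℝ), φ x = 1 / 2)
    (hmom : Integrable (fun v => v * φ v) (volume.restrict (Ioi (0 : ℝ))))
    (I : ℝ → ℝ)
    (hI : ∀ a, I a = 2 * (∫ v in Ioc (0 : ℝ) a, v * φ v) + a * ∫ v in Ioi a, φ v) :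
    ∃ c C : ℝ, 0 < c ∧ c ≤ C ∧
      ∀ a : ℝ, 0 < a → c * min a 1 ≤ I a ∧ I a ≤ C * min a 1 := by
  have hφ : IntegrableOn φ (Ioi 0) := by
    by_contra h
    rw [integral_undef h] at hint
    norm_num at hint
  have hφ0 : ∀ v, 0 < v → 0 ≤ φ v := fun v hv => h0 v hv.le
  have hI_comparable : ∀ a, 0 < a →
      truncatedMoment φ a ≤ I a ∧ I a ≤ 2 * truncatedMoment φ a := by
    intro a ha
    have hbulk : 0 ≤ ∫ v in Ioc 0 a, v * φ v :=
      setIntegral_nonneg measurableSet_Ioc fun v hv => mul_nonneg hv.1.le (hφ0 v hv.1)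
    have htail : 0 ≤ a * ∫ v in Ioi a, φ v :=
      mul_nonneg ha.le (setIntegral_nonneg measurableSet_Ioi fun v hv => hφ0 v (ha.trans hv))
    rw [hI, truncatedMoment_eq ha.le hφ hmom]
    constructor <;> linarith
  have hbounds : ∀ a, 0 < a → truncatedMoment φ 1 * min a 1 ≤ I a ∧
      I a ≤ 2 * max (1 / 2) (∫ v in Ioi 0, v * φ v) * min a 1 := by
    intro a ha
    have hlower := min_mul_truncatedMoment_one_le ha.le hφ0 hφ hmom
    have hupper := truncatedMoment_le_mul_min ha.le hφ0 hφ hmom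
    rw [hint] at hupper
    constructor <;> linarith [hI_comparable a ha]
  refine ⟨_, _, truncatedMoment_pos one_pos hφ0 hφ hmom (by rw [hint]; norm_num), ?_, hbounds⟩
  simpa using (hbounds 1 one_pos).1.trans (hbounds 1 one_pos).2

/-- If `φ : [0,∞) → [0,1]` is non-increasing with `∫_0^∞ φ = 1/2` and
`∫_0^∞ v φ(v) dv < ∞`, then `I(a) = 2∫_0^a vφ(v)dv + a∫_a^∞ φ(v)dv ≍ a ∧ 1`. -/
theorem I_asymptotics_integrable_case
    (φ : ℝ → ℝ)
    (hanti : AntitoneOn φ (Ici 0))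
    (h0 : ∀ x, 0 ≤ x → 0 ≤ φ x) (h1 : ∀ x, 0 ≤ x → φ x ≤ 1)
    (hmeas : Measurable φ)
    (hint : ∫ x in Ioi (0 : ℝ), φ x = 1 / 2)
    (hmom : Integrable (fun v => v * φ v) (volume.restrict (Ioi (0 : ℝ))))
    (I : ℝ → ℝ)
    (hI : ∀ a, I a = 2 * (∫ v in Ioc (0 : ℝ) a, v * φ v) + a * ∫ v in Ioi a, φ v) :
    ∃ c C : ℝ, 0 < c ∧ c ≤ C ∧
      ∀ a : ℝ, 0 < a → c * min a 1 ≤ I a ∧ I a ≤ C * min a 1 :=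
  I_asymptotics_integrable_case_general φ h0 hint hmom I hI
end
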